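/- arXiv:2605.27278 — 7 statements merged into one kernel-verified Lean document; each statement's English description precedes it below -/
import Mathlib

section
/- For every real number t > 0, letting T = ((t+1)·ln(t+1))/t, we have T − 1 − ln T < t²/8. -/
/-!
Write `T = (t + 1) log (t + 1) / t`. The inequalities `t < (t + 1) log (t + 1)` and
`log x < sinh (log x) = (x - x⁻¹) / 2` at `x = t + 1` give `1 < T < 1 + t / 2`, and
`2u / (u + 2) < log (1 + u)` gives `T - 1 - log T < (T - 1)² / 2 < t² / 8`.
-/

namespace Real

lemma log_lt_sub_inv_div_two {x : ℝ} (hx : 1 < x) : log x < (x - x⁻¹) / 2 := by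
  rw [← sinh_log (by linarith)]
  exact self_lt_sinh_iff.2 (log_pos hx)

lemma sub_one_sub_log_lt_sq_div_two {x : ℝ} (hx : 1 < x) : x - 1 - log x < (x - 1) ^ 2 / 2 := by
  have hu : 0 < x - 1 := by linarith
  have hlog : 2 * (x - 1) / (x - 1 + 2) < log x := by
    simpa using lt_log_one_add_of_pos hu
  calc x - 1 - log x < x - 1 - 2 * (x - 1) / (x - 1 + 2) := by linarith
    _ = (x - 1) ^ 2 / (x + 1) := by field_simp; ring
    _ < (x - 1) ^ 2 / 2 := by gcongr; linarith

lemma one_lt_add_one_mul_log_add_one_div {t : ℝ} (ht : 0 < t) :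
    1 < (t + 1) * log (t + 1) / t := by
  rw [one_lt_div ht]
  simpa using self_sub_one_lt_mul_log (x := t + 1) (by linarith) (by linarith)

lemma add_one_mul_log_add_one_div_lt {t : ℝ} (ht : 0 < t) :
    (t + 1) * log (t + 1) / t < 1 + t / 2 := by
  have h1 : 0 < t + 1 := by linarith
  have hlog := log_lt_sub_inv_div_two (x := t + 1) (by linarith)
  rw [div_lt_iff₀ ht]
  calc (t + 1) * log (t + 1) < (t + 1) * ((t + 1 - (t + 1)⁻¹) / 2) := by gcongr
    _ = (1 + t / 2) * t := by field_simp; ring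

end Real

theorem stmt_1 (t : ℝ) (ht : 0 < t) :
    ((t + 1) * Real.log (t + 1)) / t - 1 - Real.log (((t + 1) * Real.log (t + 1)) / t)
      < t ^ 2 / 8 := by
  set T := (t + 1) * Real.log (t + 1) / t
  have hT : 1 < T := Real.one_lt_add_one_mul_log_add_one_div ht
  have hT' : T < 1 + t / 2 := Real.add_one_mul_log_add_one_div_lt ht
  calc T - 1 - Real.log T < (T - 1) ^ 2 / 2 := Real.sub_one_sub_log_lt_sq_div_two hT
    _ < (t / 2) ^ 2 / 2 := by gcongr; linarith
    _ = t ^ 2 / 8 := by ring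
end

section
/- Let ε > 0 and ξ = e^{ε/2}. For every integer n ≥ 2, the minimum over integers k with 1 ≤ k ≤ n−1 of (kξ² + n − k)/(k(n−k)) is at least (ξ+1)²/n. -/
/- With m = n - k the left-hand side splits as ξ²/m + 1/k, and the two-term case of
Sedrakyan's (Titu's) inequality bounds this below by (ξ + 1)²/(m + k) = (ξ + 1)²/n. -/

theorem add_sq_div_add_le_sq_div_add_sq_div {R : Type*} [Field R] [LinearOrder R]
    [IsStrictOrderedRing R] (a b : R) {u v : R} (hu : 0 < u) (hv : 0 < v) :
    (a + b) ^ 2 / (u + v) ≤ a ^ 2 / u + b ^ 2 / v := by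
  simpa [Fin.sum_univ_two] using
    Finset.sq_sum_div_le_sum_sq_div Finset.univ ![a, b] (g := ![u, v])
      (by simp [Fin.forall_fin_two, hu, hv])

theorem stmt_6_general (n : ℕ) (ε : ℝ) (k : ℕ)
    (hk1 : 1 ≤ k) (hk2 : k ≤ n - 1) :
    ((k : ℝ) * Real.exp (ε / 2) ^ 2 + (n : ℝ) - k) / ((k : ℝ) * ((n : ℝ) - k))
      ≥ (Real.exp (ε / 2) + 1) ^ 2 / n := by
  set ξ := Real.exp (ε / 2)
  have hk : (0 : ℝ) < k := by exact_mod_cast hk1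
  have hnk : (0 : ℝ) < n - k := by
    rw [sub_pos, Nat.cast_lt]
    omega
  calc (ξ + 1) ^ 2 / n = (ξ + 1) ^ 2 / ((n - k) + k) := by rw [sub_add_cancel]
    _ ≤ ξ ^ 2 / (n - k) + 1 ^ 2 / k := add_sq_div_add_le_sq_div_add_sq_div ξ 1 hnk hk
    _ = (k * ξ ^ 2 + n - k) / (k * (n - k)) := by
      field_simp
      ring

theorem stmt_6 (n : ℕ) (hn : 2 ≤ n) (ε : ℝ) (hε : 0 < ε) (k : ℕ)
    (hk1 : 1 ≤ k) (hk2 : k ≤ n - 1) :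
    ((k : ℝ) * Real.exp (ε / 2) ^ 2 + (n : ℝ) - k) / ((k : ℝ) * ((n : ℝ) - k))
      ≥ (Real.exp (ε / 2) + 1) ^ 2 / n :=
  stmt_6_general n ε k hk1 hk2
end

section
/- Let n, d ≥ 2, r ∈ [d−1], c = (nr−d)/(d(n−1)), and ε > 0. Suppose n = d/r (so c = 0), and let P_1,…,P_n be pairwise orthogonal rank-r projections summing to I_d. For μ ∈ [0, d/(d−r)], define σ_x = (μ/d)I_d + ((1−μ)/r)P_x. Then σ_{x'} ≤ e^ε σ_x for all x, x' ∈ [n] (i.e., the mechanism is ε-QLDP) if and only if n/(n−1+e^ε) ≤ μ ≤ n/(n−1+e^{−ε}). -/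
/-!
With `a = μ / d` and `b = (1 - μ) / r`, every `σ_x = a + b P_x` is a combination of the commuting
projections `P_i`. For `x ≠ x'`, the matrix `e^ε σ_x - σ_{x'}` acts as `e^ε (a + b) - a` on the range
of `P_x`, as `e^ε a - (a + b)` on the range of `P_{x'}`, and as `(e^ε - 1) a` on the range of
`1 - P_x - P_{x'} = ∑_{i ≠ x, x'} P_i`. So the mechanism is `ε`-private iff the two eigenvalues
`a` and `a + b` of `σ_x` are within a factor `e^ε` of each other (the third coefficient is then
nonnegative automatically), and for `d = n r` these two inequalities are the two bounds on `μ`.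
-/

open ComplexOrder

namespace Matrix

variable {m : Type*}

lemma posSemidef_one_sub_sum {R : Type*} [CommRing R] [PartialOrder R] [StarRing R]
    [IsOrderedAddMonoid R] [DecidableEq m] {ι : Type*} [Fintype ι] {P : ι → Matrix m m R}
    (hP : ∀ i, (P i).PosSemidef) (hsum : ∑ i, P i = 1) (s : Finset ι) :
    (1 - ∑ i ∈ s, P i).PosSemidef := by
  classical
  rw [← hsum, ← Finset.sum_sdiff (Finset.subset_univ s), add_sub_cancel_right]
  exact posSemidef_sum _ fun i _ => hP i

variable [Fintype m]

lemma PosSemidef.of_isHermitian_of_mul_self {R : Type*} [CommRing R] [PartialOrder R]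
    [StarRing R] [StarOrderedRing R] {P : Matrix m m R} (hP : P.IsHermitian) (hPP : P * P = P) :
    P.PosSemidef := by
  simpa [hP.eq, hPP] using posSemidef_conjTranspose_mul_self P

lemma PosSemidef.nonneg_of_mulVec_eq_smul {A : Matrix m m ℂ} (hA : A.PosSemidef) {w : m → ℂ}
    (hw : w ≠ 0) {c : ℂ} (h : A *ᵥ w = c • w) : 0 ≤ c := by
  have hAw := hA.dotProduct_mulVec_nonneg w
  rw [h, dotProduct_smul, smul_eq_mul] at hAw
  exact le_of_mul_le_mul_right (by rwa [zero_mul]) (dotProduct_star_self_pos_iff.mpr hw)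

lemma exists_ne_zero_mulVec_eq_self {R : Type*} [Semiring R] [DecidableEq m] {P : Matrix m m R}
    (hPP : P * P = P) (hP : P ≠ 0) : ∃ w ≠ 0, P *ᵥ w = w := by
  obtain ⟨j, hj⟩ : ∃ j, P *ᵥ Pi.single j 1 ≠ 0 := by
    by_contra! h
    exact hP (ext fun i j => by simpa using congrFun (h j) i)
  exact ⟨_, hj, by rw [mulVec_mulVec, hPP]⟩

variable [DecidableEq m] {ι : Type*} {P σ : ι → Matrix m m ℂ} {a b E : ℝ}

theorem le_of_posSemidef_smul_sub {x x' : ι} (hproj : P x * P x = P x) (hne : P x ≠ 0)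
    (horth : P x' * P x = 0) (hσ : ∀ x, σ x = (a : ℂ) • 1 + (b : ℂ) • P x)
    (h₁ : ((E : ℂ) • σ x - σ x').PosSemidef) (h₂ : ((E : ℂ) • σ x' - σ x).PosSemidef) :
    a ≤ E * (a + b) ∧ a + b ≤ E * a := by
  obtain ⟨w, hw, hxw⟩ := exists_ne_zero_mulVec_eq_self hproj hne
  have hx'w : P x' *ᵥ w = 0 := by rw [← hxw, mulVec_mulVec, horth, zero_mulVec]
  have hσx : σ x *ᵥ w = ((a + b : ℝ) : ℂ) • w := by
    rw [hσ, add_mulVec, smul_mulVec, smul_mulVec, one_mulVec, hxw]; push_cast; module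
  have hσx' : σ x' *ᵥ w = (a : ℂ) • w := by
    rw [hσ, add_mulVec, smul_mulVec, smul_mulVec, one_mulVec, hx'w, smul_zero, add_zero]
  have hU := h₁.nonneg_of_mulVec_eq_smul hw (c := ((E * (a + b) - a : ℝ) : ℂ)) (by
    rw [sub_mulVec, smul_mulVec, hσx, hσx']; push_cast; module)
  have hL := h₂.nonneg_of_mulVec_eq_smul hw (c := ((E * a - (a + b) : ℝ) : ℂ)) (by
    rw [sub_mulVec, smul_mulVec, hσx, hσx']; push_cast; module)
  rw [Complex.zero_le_real, sub_nonneg] at hU hL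
  exact ⟨hU, hL⟩

theorem posSemidef_smul_sub_of_le [Fintype ι] (hherm : ∀ i, (P i).IsHermitian)
    (hproj : ∀ i, P i * P i = P i) (hsum : ∑ i, P i = 1)
    (hσ : ∀ x, σ x = (a : ℂ) • 1 + (b : ℂ) • P x) (hE : 1 ≤ E)
    (h₁ : a ≤ E * (a + b)) (h₂ : a + b ≤ E * a) (x x' : ι) :
    ((E : ℂ) • σ x - σ x').PosSemidef := by
  classical
  have hP i := PosSemidef.of_isHermitian_of_mul_self (hherm i) (hproj i)
  have hsmul {c : ℝ} (hc : 0 ≤ c) {A : Matrix m m ℂ} (hA : A.PosSemidef) :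
      ((c : ℂ) • A).PosSemidef :=
    hA.smul (Complex.zero_le_real.mpr hc)
  -- `a ≤ E (a + b) ≤ E² a`, and likewise for `a + b`
  have ha : 0 ≤ (E - 1) * a := by nlinarith
  by_cases hxx' : x = x'
  · subst hxx'
    have hab : 0 ≤ (E - 1) * (a + b) := by nlinarith
    have hdecomp : (E : ℂ) • σ x - σ x = (((E - 1) * a : ℝ) : ℂ) • (1 - ∑ i ∈ {x}, P i) +
        (((E - 1) * (a + b) : ℝ) : ℂ) • P x := by
      rw [hσ, Finset.sum_singleton]; push_cast; module
    rw [hdecomp]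
    exact (hsmul ha (posSemidef_one_sub_sum hP hsum _)).add (hsmul hab (hP x))
  · have hdecomp : (E : ℂ) • σ x - σ x' = ((E * (a + b) - a : ℝ) : ℂ) • P x +
        ((E * a - (a + b) : ℝ) : ℂ) • P x' +
        (((E - 1) * a : ℝ) : ℂ) • (1 - ∑ i ∈ {x, x'}, P i) := by
      rw [hσ, hσ, Finset.sum_pair hxx']; push_cast; module
    rw [hdecomp]
    exact ((hsmul (by linarith) (hP x)).add (hsmul (by linarith) (hP x'))).add
      (hsmul ha (posSemidef_one_sub_sum hP hsum _))

end Matrix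

section Thresholds

variable {n r d μ t : ℝ}

lemma mul_div_sub_add_div_eq (hr : 0 < r) (hn : 1 ≤ n) (hd : d = n * r) :
    t * (μ / d) - (μ / d + (1 - μ) / r) = (μ * (n - 1 + t) - n) / d := by
  subst hd
  have : n ≠ 0 := by positivity
  field_simp
  ring

lemma add_div_le_mul_div_iff (hr : 0 < r) (hn : 1 ≤ n) (hd : d = n * r) (ht : 0 < t) :
    μ / d + (1 - μ) / r ≤ t * (μ / d) ↔ n / (n - 1 + t) ≤ μ := by
  have hd0 : 0 < d := hd ▸ by positivity
  rw [← sub_nonneg, mul_div_sub_add_div_eq hr hn hd, le_div_iff₀ hd0, zero_mul,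
    div_le_iff₀ (by linarith), sub_nonneg]

lemma mul_div_le_add_div_iff (hr : 0 < r) (hn : 1 ≤ n) (hd : d = n * r) (ht : 0 < t) :
    t * (μ / d) ≤ μ / d + (1 - μ) / r ↔ μ ≤ n / (n - 1 + t) := by
  have hd0 : 0 < d := hd ▸ by positivity
  rw [← sub_nonpos, mul_div_sub_add_div_eq hr hn hd, div_le_iff₀ hd0, zero_mul,
    le_div_iff₀ (by linarith), sub_nonpos]

end Thresholds

open ComplexOrder in
theorem stmt_11_general (n d r : ℕ) (hn : 2 ≤ n) (hr1 : 1 ≤ r)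
    (hnd : d = n * r) (ε : ℝ) (hε : 0 < ε)
    (P : Fin n → Matrix (Fin d) (Fin d) ℂ)
    (hherm : ∀ i, (P i).IsHermitian)
    (hproj : ∀ i, P i * P i = P i)
    (htr : ∀ i, (P i).trace = (r : ℂ))
    (horth : ∀ i j, i ≠ j → P i * P j = 0)
    (hsum : ∑ i, P i = 1)
    (μ : ℝ)
    (σ : Fin n → Matrix (Fin d) (Fin d) ℂ)
    (hσ : ∀ x, σ x = ((μ / d : ℝ) : ℂ) • 1 + (((1 - μ) / r : ℝ) : ℂ) • P x) :
    (∀ x x', ((Real.exp ε : ℂ) • σ x - σ x').PosSemidef) ↔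
      ((n : ℝ) / ((n : ℝ) - 1 + Real.exp ε) ≤ μ ∧
        μ ≤ (n : ℝ) / ((n : ℝ) - 1 + Real.exp (-ε))) := by
  have hn1 : (1 : ℝ) ≤ n := by exact_mod_cast (by omega : 1 ≤ n)
  have hr : (0 : ℝ) < r := by exact_mod_cast hr1
  have hdR : (d : ℝ) = n * r := by exact_mod_cast hnd
  have hE := Real.exp_pos ε
  have hlow := add_div_le_mul_div_iff (μ := μ) hr hn1 hdR hE
  have hup : μ / d ≤ Real.exp ε * (μ / d + (1 - μ) / r) ↔
      μ ≤ n / (n - 1 + Real.exp (-ε)) := by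
    rw [← mul_div_le_add_div_iff hr hn1 hdR (Real.exp_pos _), Real.exp_neg, inv_mul_le_iff₀ hE]
  constructor
  · intro h
    let x : Fin n := ⟨0, by omega⟩
    let x' : Fin n := ⟨1, by omega⟩
    have hne : P x ≠ 0 := fun h0 => by
      have := htr x
      rw [h0, Matrix.trace_zero, eq_comm, Nat.cast_eq_zero] at this
      omega
    obtain ⟨h₁, h₂⟩ := Matrix.le_of_posSemidef_smul_sub (hproj x) hne
      (horth x' x (by simp [x, x', Fin.ext_iff])) hσ (h x x') (h x' x)
    exact ⟨hlow.mp h₂, hup.mp h₁⟩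
  · rintro ⟨h₁, h₂⟩
    exact Matrix.posSemidef_smul_sub_of_le hherm hproj hsum hσ (Real.one_le_exp hε.le)
      (hup.mpr h₂) (hlow.mpr h₁)

open ComplexOrder in
theorem stmt_11 (n d r : ℕ) (hn : 2 ≤ n) (hd : 2 ≤ d) (hr1 : 1 ≤ r) (hrd : r ≤ d - 1)
    (hnd : d = n * r) (ε : ℝ) (hε : 0 < ε)
    (P : Fin n → Matrix (Fin d) (Fin d) ℂ)
    (hherm : ∀ i, (P i).IsHermitian)
    (hproj : ∀ i, P i * P i = P i)
    (htr : ∀ i, (P i).trace = (r : ℂ))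
    (horth : ∀ i j, i ≠ j → P i * P j = 0)
    (hsum : ∑ i, P i = 1)
    (μ : ℝ) (hμ0 : 0 ≤ μ) (hμ1 : μ ≤ (d : ℝ) / ((d : ℝ) - r))
    (σ : Fin n → Matrix (Fin d) (Fin d) ℂ)
    (hσ : ∀ x, σ x = ((μ / d : ℝ) : ℂ) • 1 + (((1 - μ) / r : ℝ) : ℂ) • P x) :
    (∀ x x', ((Real.exp ε : ℂ) • σ x - σ x').PosSemidef) ↔
      ((n : ℝ) / ((n : ℝ) - 1 + Real.exp ε) ≤ μ ∧
        μ ≤ (n : ℝ) / ((n : ℝ) - 1 + Real.exp (-ε))) :=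
  stmt_11_general n d r hn hr1 hnd ε hε P hherm hproj htr horth hsum μ σ hσ
end

section
/- For ε > 0 and η ∈ (0, 1/(1+√ε)), the inequality η(e^ε − e^{ηε(1+√ε)}) < (1−η)(e^{ηε(1+√ε)} − 1) holds for all sufficiently small ε > 0 (uniformly in η ∈ (0, 1/(1+√ε))). -/
/-! With `a = ηε(1 + √ε)` the inequality rearranges to `η e^ε + (1 - η) < e^a`. For `ε ≤ 1/4`,
`e^ε ≤ 1/(1 - ε) ≤ 1 + ε(1 + √ε)`, so the left side is at most `1 + a`, which is `< e^a`. -/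

open Real

theorem Real.exp_le_one_add_mul_one_add_sqrt {x : ℝ} (hx₀ : 0 ≤ x) (hx : x ≤ 1 / 4) :
    exp x ≤ 1 + x * (1 + √x) := by
  calc exp x ≤ 1 / (1 - x) := exp_bound_div_one_sub_of_interval hx₀ (by linarith)
    _ ≤ 1 + x * (1 + √x) := by
      rw [div_le_iff₀ (by linarith)]
      obtain ⟨s, hs₀, rfl⟩ : ∃ s, 0 ≤ s ∧ x = s ^ 2 := ⟨√x, sqrt_nonneg x, (sq_sqrt hx₀).symm⟩
      have hs : s ≤ 1 / 2 := by nlinarith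
      rw [sqrt_sq hs₀]
      -- `(1 + s²(1 + s))(1 - s²) - 1 = s³(1 - s - s²)`
      nlinarith [mul_nonneg (pow_nonneg hs₀ 3) (by nlinarith : 0 ≤ 1 - s - s ^ 2)]

theorem stmt_13 :
    ∃ ε₀ > (0 : ℝ), ∀ ε : ℝ, 0 < ε → ε ≤ ε₀ →
      ∀ η : ℝ, 0 < η → η < 1 / (1 + Real.sqrt ε) →
        η * (Real.exp ε - Real.exp (η * ε * (1 + Real.sqrt ε)))
          < (1 - η) * (Real.exp (η * ε * (1 + Real.sqrt ε)) - 1) := by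
  refine ⟨1 / 4, by norm_num, fun ε hε hε₀ η hη _ => ?_⟩
  have hexp : η * exp ε ≤ η * (1 + ε * (1 + √ε)) :=
    mul_le_mul_of_nonneg_left (exp_le_one_add_mul_one_add_sqrt hε.le hε₀) hη.le
  have htangent : η * ε * (1 + √ε) + 1 < exp (η * ε * (1 + √ε)) :=
    add_one_lt_exp (by positivity)
  linarith
end

section
/- Let n ≥ 2 and ε > 0, set u ∈ [1/n, 1/2], and define μ₀ by 1/(1−μ₀) = 1 + 1/(u(e^ε − 1)), i.e., μ₀ = 1/(u(e^ε−1)+1). Then with c = (nu−1)/(n−1), the quantity 1 − G(μ₀), where G(μ₀) = (1−2u)μ₀ + c(2uμ₀ + 1 − μ₀) + 2(1−c)√(uμ₀(uμ₀+1−μ₀)), equals ((e^{ε/2}−1)²/(n−1)) · nu(1−u)/(u(e^ε−1)+1). -/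
/-!
Write `A = uμ + 1 - μ` and `B = uμ`. Completing the square shows that the quantity is
`1 - (1 - c) (√A - √B)²`. The choice `μ₀ = 1 / (u(e^ε - 1) + 1)` makes `A = e^ε B`, so
`(√A - √B)² = (e^{ε/2} - 1)² B` with `B = u / (u(e^ε - 1) + 1)`, and `1 - c = n(1 - u)/(n - 1)`.
-/

open Real

lemma fidelity_eq_one_sub_sq_sqrt_sub_sqrt (u μ c : ℝ) (hA : 0 ≤ u * μ + 1 - μ)
    (hB : 0 ≤ u * μ) :
    (1 - 2 * u) * μ + c * (2 * u * μ + 1 - μ) + 2 * (1 - c) * √(u * μ * (u * μ + 1 - μ))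
      = 1 - (1 - c) * (√(u * μ + 1 - μ) - √(u * μ)) ^ 2 := by
  rw [sqrt_mul hB, sub_sq, sq_sqrt hA, sq_sqrt hB]
  ring

lemma mul_add_one_sub_eq_mul_of_eq_inv {u t μ : ℝ} (hD : u * (t - 1) + 1 ≠ 0)
    (hμ : μ = 1 / (u * (t - 1) + 1)) :
    u * μ + 1 - μ = t * (u * μ) := by
  subst hμ
  field_simp
  ring

lemma sq_sqrt_mul_sub_sqrt {t x : ℝ} (ht : 0 ≤ t) (hx : 0 ≤ x) :
    (√(t * x) - √x) ^ 2 = (√t - 1) ^ 2 * x := by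
  rw [sqrt_mul ht, ← sq_sqrt hx, sqrt_sq (sqrt_nonneg x)]
  ring

theorem stmt_15_general (n : ℕ) (hn : 2 ≤ n) (ε u : ℝ)
    (hu1 : 1 / (n : ℝ) ≤ u) (hu2 : u ≤ 1 / 2)
    (μ c : ℝ)
    (hμ : μ = 1 / (u * (Real.exp ε - 1) + 1))
    (hc : c = ((n : ℝ) * u - 1) / ((n : ℝ) - 1)) :
    1 - ((1 - 2 * u) * μ + c * (2 * u * μ + 1 - μ)
          + 2 * (1 - c) * Real.sqrt (u * μ * (u * μ + 1 - μ)))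
      = (Real.exp (ε / 2) - 1) ^ 2 / ((n : ℝ) - 1)
          * ((n : ℝ) * u * (1 - u) / (u * (Real.exp ε - 1) + 1)) := by
  have hn1 : (1 : ℝ) < n := by exact_mod_cast hn
  have hu0 : 0 ≤ u := le_trans (by positivity) hu1
  have hD : 0 < u * (exp ε - 1) + 1 := by nlinarith [exp_pos ε]
  have hB : 0 ≤ u * μ := by rw [hμ]; positivity
  have hA := mul_add_one_sub_eq_mul_of_eq_inv hD.ne' hμ
  rw [fidelity_eq_one_sub_sq_sqrt_sub_sqrt u μ c (hA ▸ by positivity) hB, hA,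
    sq_sqrt_mul_sub_sqrt (exp_pos ε).le hB, ← exp_half, hμ, hc]
  field_simp [(sub_pos.mpr hn1).ne']
  ring

theorem stmt_15 (n : ℕ) (hn : 2 ≤ n) (ε u : ℝ) (hε : 0 < ε)
    (hu1 : 1 / (n : ℝ) ≤ u) (hu2 : u ≤ 1 / 2)
    (μ c : ℝ)
    (hμ : μ = 1 / (u * (Real.exp ε - 1) + 1))
    (hc : c = ((n : ℝ) * u - 1) / ((n : ℝ) - 1)) :
    1 - ((1 - 2 * u) * μ + c * (2 * u * μ + 1 - μ)
          + 2 * (1 - c) * Real.sqrt (u * μ * (u * μ + 1 - μ)))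
      = (Real.exp (ε / 2) - 1) ^ 2 / ((n : ℝ) - 1)
          * ((n : ℝ) * u * (1 - u) / (u * (Real.exp ε - 1) + 1)) :=
  stmt_15_general n hn ε u hu1 hu2 μ c hμ hc
end

section
/- Let ε > 0, θ = e^ε − 1, n ≥ 2, and L(t) = t ln t. Then max over integers k ∈ [0:n] of (kL(θ+1) − nL((kθ+n)/n))/(kθ+n) is at most L(θ+1)/θ − 1 − ln(L(θ+1)/θ), which in turn is strictly less than θ²/8. -/
/-!
With `a = kθ + n`, `x = a / n` and `L(θ + 1) = θ T`, the objective is `((x - 1) T - x log x) / x`,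
and the first bound is Gibbs' inequality `x log (T / x) ≤ T - x`.
For the second, `1 ≤ T < 1 + θ / 2`, the upper bound coming from `log y < sinh (log y) = (y - y⁻¹) / 2`
at `y = θ + 1`, while `log T ≥ 2 (T - 1) / (T + 1)` gives `T - 1 - log T ≤ (T - 1)² / 2`.
-/

open Real

namespace Real

lemma mul_log_div_le_sub {x y : ℝ} (hx : 0 < x) (hy : 0 < y) : x * log (y / x) ≤ y - x := by
  have h := mul_le_mul_of_nonneg_left (log_le_sub_one_of_pos (div_pos hy hx)) hx.le
  rwa [mul_sub, mul_div_cancel₀ _ hx.ne', mul_one] at h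

lemma sub_mul_sub_mul_log_div_le {n a T : ℝ} (hn : 0 < n) (ha : 0 < a) (hT : 0 < T) :
    ((a - n) * T - n * (a / n * log (a / n))) / a ≤ T - 1 - log T := by
  set x := a / n with hx
  have hxpos : 0 < x := div_pos ha hn
  have hax : a = n * x := by rw [hx, mul_div_cancel₀ _ hn.ne']
  have gibbs := mul_log_div_le_sub hxpos hT
  rw [log_div hT.ne' hxpos.ne'] at gibbs
  rw [div_le_iff₀ ha, hax]
  nlinarith [mul_le_mul_of_nonneg_left gibbs hn.le]

lemma one_le_mul_log_div {θ : ℝ} (hθ : 0 < θ) : 1 ≤ (θ + 1) * log (θ + 1) / θ := by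
  have h := one_sub_inv_le_log_of_pos (x := θ + 1) (by positivity)
  rw [le_div_iff₀ hθ, one_mul]
  calc θ = (θ + 1) * (1 - (θ + 1)⁻¹) := by field_simp; ring
    _ ≤ (θ + 1) * log (θ + 1) := by gcongr

lemma mul_log_div_lt {θ : ℝ} (hθ : 0 < θ) : (θ + 1) * log (θ + 1) / θ < 1 + θ / 2 := by
  have hlog : log (θ + 1) < (θ + 1 - (θ + 1)⁻¹) / 2 := by
    rw [← sinh_log (by positivity)]
    exact self_lt_sinh_iff.mpr (log_pos (by linarith))
  rw [div_lt_iff₀ hθ]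
  calc (θ + 1) * log (θ + 1) < (θ + 1) * ((θ + 1 - (θ + 1)⁻¹) / 2) := by gcongr
    _ = (1 + θ / 2) * θ := by field_simp; ring

lemma sub_one_sub_log_le_sq {T : ℝ} (hT : 1 ≤ T) : T - 1 - log T ≤ (T - 1) ^ 2 / 2 := by
  have h := le_log_one_add_of_nonneg (x := T - 1) (by linarith)
  rw [add_sub_cancel, show T - 1 + 2 = T + 1 by ring] at h
  calc T - 1 - log T ≤ T - 1 - 2 * (T - 1) / (T + 1) := by linarith
    _ = (T - 1) ^ 2 / (T + 1) := by field_simp; ring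
    _ ≤ (T - 1) ^ 2 / 2 := by gcongr; linarith

end Real

theorem stmt_16 (n : ℕ) (hn : 2 ≤ n) (ε : ℝ) (hε : 0 < ε)
    (θ T : ℝ) (hθ : θ = Real.exp ε - 1)
    (hT : T = ((θ + 1) * Real.log (θ + 1)) / θ) :
    (∀ k : ℕ, k ≤ n →
        ((k : ℝ) * ((θ + 1) * Real.log (θ + 1))
            - (n : ℝ) * ((((k : ℝ) * θ + n) / n) * Real.log (((k : ℝ) * θ + n) / n)))
          / ((k : ℝ) * θ + n)
          ≤ T - 1 - Real.log T) ∧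
    T - 1 - Real.log T < θ ^ 2 / 8 := by
  have hθpos : 0 < θ := by rw [hθ, sub_pos]; exact one_lt_exp_iff.mpr hε
  have hT1 : 1 ≤ T := hT ▸ one_le_mul_log_div hθpos
  refine ⟨fun k _ => ?_, ?_⟩
  · have hnpos : (0 : ℝ) < n := by exact_mod_cast (by omega : 0 < n)
    have hL : (k : ℝ) * ((θ + 1) * log (θ + 1)) = ((k * θ + n) - n) * T := by
      rw [hT]; field_simp; ring
    rw [hL]
    exact sub_mul_sub_mul_log_div_le hnpos (by positivity) (by linarith)
  · have hTθ : T - 1 < θ / 2 := by linarith [hT ▸ mul_log_div_lt hθpos]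
    calc T - 1 - log T ≤ (T - 1) ^ 2 / 2 := sub_one_sub_log_le_sq hT1
      _ < (θ / 2) ^ 2 / 2 := by gcongr
      _ = θ ^ 2 / 8 := by ring
end

section
/- Let ε > 0, u ∈ [0,1/2], and define probability vectors P_X = (1−u, u), P_{X|Y=0} = ((1−u)e^ε, u)/Z(0), P_{X|Y=1} = (1−u, ue^ε)/Z(1) with Z(0) = (1−u)e^ε + u, Z(1) = (1−u) + ue^ε. For F(t) = t², the classical F-divergence D_F(p‖q) = Σ_x q(x)F(p(x)/q(x)) satisfies D_F(P_{X|Y=1} ‖ P_X) ≥ D_F(P_{X|Y=0} ‖ P_X). -/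
/-!
For `F(t) = t²` the divergence of a tilted binary law `(a s, b t)/(a s + b t)` from `(a, b)` is
`(a s² + b t²)/(a s + b t)²`. Cross-multiplying the two divergences to compare, with `a = 1 - u`,
`b = u` and tilt `e = exp ε`, the difference factors as `a b (a - b) (e - 1)³ (e + 1)`, which is
nonnegative because `u ≤ 1/2` and `e ≥ 1`.
-/

noncomputable def fDiv {ι : Type*} [Fintype ι] (F : ℝ → ℝ) (p q : ι → ℝ) : ℝ :=
  ∑ x, q x * F (p x / q x)

lemma mul_div_sq_eq_sq_div {K : Type*} [Field K] (p q : K) : q * (p / q) ^ 2 = p ^ 2 / q := by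
  rcases eq_or_ne q 0 with rfl | hq
  · simp
  · field_simp

lemma mul_sq_div_self {K : Type*} [Field K] (a s : K) : (a * s) ^ 2 / a = a * s ^ 2 := by
  rcases eq_or_ne a 0 with rfl | ha
  · simp
  · field_simp

lemma fDiv_sq_eq_sum {ι : Type*} [Fintype ι] (p q : ι → ℝ) :
    fDiv (· ^ 2) p q = ∑ x, p x ^ 2 / q x := by
  simp only [fDiv, mul_div_sq_eq_sq_div]

lemma fDiv_sq_tilt (a b s t : ℝ) :
    fDiv (· ^ 2) ![a * s / (a * s + b * t), b * t / (a * s + b * t)] ![a, b] =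
      (a * s ^ 2 + b * t ^ 2) / (a * s + b * t) ^ 2 := by
  rw [fDiv_sq_eq_sum, Fin.sum_univ_two]
  simp only [Matrix.cons_val_zero, Matrix.cons_val_one, div_pow]
  rw [div_right_comm _ _ a, div_right_comm _ _ b, mul_sq_div_self, mul_sq_div_self, add_div]

lemma tilt_ratio_le_of_le {a b e : ℝ} (hb : 0 ≤ b) (hba : b ≤ a) (he : 1 ≤ e) :
    (a * e ^ 2 + b) / (a * e + b) ^ 2 ≤ (a + b * e ^ 2) / (a + b * e) ^ 2 := by
  rcases hba.eq_or_lt with rfl | hba'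
  · rw [add_comm (b * e ^ 2), add_comm (b * e)]
  have ha : 0 < a := hb.trans_lt hba'
  rw [div_le_div_iff₀ (by positivity) (by positivity), ← sub_nonneg]
  have hfactor : (a + b * e ^ 2) * (a * e + b) ^ 2 - (a * e ^ 2 + b) * (a + b * e) ^ 2 =
      a * b * (a - b) * (e - 1) ^ 3 * (e + 1) := by ring
  rw [hfactor]
  have he1 : 0 ≤ e - 1 := sub_nonneg.mpr he
  have hab : 0 ≤ a - b := sub_nonneg.mpr hba
  positivity

theorem stmt_19 (ε u : ℝ) (hε : 0 < ε) (hu0 : 0 ≤ u) (hu : u ≤ 1 / 2) :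
    let Z0 : ℝ := (1 - u) * Real.exp ε + u
    let Z1 : ℝ := (1 - u) + u * Real.exp ε
    let PX : Fin 2 → ℝ := ![1 - u, u]
    let P0 : Fin 2 → ℝ := ![(1 - u) * Real.exp ε / Z0, u / Z0]
    let P1 : Fin 2 → ℝ := ![(1 - u) / Z1, u * Real.exp ε / Z1]
    (∑ x, PX x * (P1 x / PX x) ^ 2) ≥ ∑ x, PX x * (P0 x / PX x) ^ 2 := by
  intro Z0 Z1 PX P0 P1
  change fDiv (· ^ 2) P1 PX ≥ fDiv (· ^ 2) P0 PX
  have hD0 := fDiv_sq_tilt (1 - u) u (Real.exp ε) 1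
  have hD1 := fDiv_sq_tilt (1 - u) u 1 (Real.exp ε)
  simp only [mul_one, one_pow] at hD0 hD1
  rw [hD0, hD1]
  exact tilt_ratio_le_of_le hu0 (by linarith) (Real.one_le_exp hε.le)
end
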